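/- arXiv:2106.14668 — 4 statements merged into one kernel-verified Lean document; each statement's English description precedes it below -/
import Mathlib

section
/- Let A ∈ ℝ^{2×2}, let c < 0, and set B := cA (so b_{ij} = c·a_{ij}). Suppose (p,q) ∈ (0,1)² is an interior Nash equilibrium, i.e., ΔA(q) = 0 and ΔB(p) = 0. Let x, y : ℝ → (0,1) be a replicator dynamics trajectory for the game (A,B). Then the weighted sum of KL divergences t ↦ (−c)·D(p‖x(t)) + D(q‖y(t)) is constant in t (it is an invariant of the motion, with positive weight −c > 0 on the first term). -/
/-- KL divergence between Bernoulli(p) and Bernoulli(x). -/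
noncomputable def klBern (p x : ℝ) : ℝ :=
  p * Real.log (p / x) + (1 - p) * Real.log ((1 - p) / (1 - x))

/-- Row player's payoff difference against column strategy (y, 1-y). -/
def payoffDiffRow (A : Matrix (Fin 2) (Fin 2) ℝ) (y : ℝ) : ℝ :=
  (A 0 0 - A 1 0) * y + (A 0 1 - A 1 1) * (1 - y)

/-- Column player's payoff difference against row strategy (x, 1-x). -/
def payoffDiffCol (B : Matrix (Fin 2) (Fin 2) ℝ) (x : ℝ) : ℝ :=
  (B 0 0 - B 0 1) * x + (B 1 0 - B 1 1) * (1 - x)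

/-! The weighted KL divergence `V = (-c)·D(p‖x) + D(q‖y)` satisfies `∂D(p‖x)/∂x = (x - p)/(x(1 - x))`,
so along the replicator flow `V' = (-c)(x - p)·ΔA(y) + (y - q)·ΔB(x)`. Both payoff differences are
affine and vanish at the equilibrium, so `ΔA(y) = α(y - q)` and `ΔB(x) = cα(x - p)` with the same
interaction coefficient `α = a₁₁ - a₂₁ - a₁₂ + a₂₂`, and the two terms of `V'` cancel. -/

open Real Set

lemma mul_log_div_eq_mul_log_sub (p : ℝ) {x : ℝ} (hx : x ≠ 0) :
    p * log (p / x) = p * log p - p * log x := by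
  rcases eq_or_ne p 0 with rfl | hp
  · simp
  · rw [log_div hp hx]; ring

lemma klBern_eq_sub (p : ℝ) {x : ℝ} (hx₀ : x ≠ 0) (hx₁ : 1 - x ≠ 0) :
    klBern p x = p * log p + (1 - p) * log (1 - p) - (p * log x + (1 - p) * log (1 - x)) := by
  rw [klBern, mul_log_div_eq_mul_log_sub p hx₀, mul_log_div_eq_mul_log_sub (1 - p) hx₁]
  ring

lemma hasDerivAt_klBern (p : ℝ) {x : ℝ} (hx : x ∈ Ioo (0 : ℝ) 1) :
    HasDerivAt (klBern p) ((x - p) / (x * (1 - x))) x := by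
  have hx₀ : x ≠ 0 := hx.1.ne'
  have hx₁ : 1 - x ≠ 0 := sub_ne_zero.2 hx.2.ne'
  have hcross : HasDerivAt (fun u => p * log u + (1 - p) * log (1 - u))
      (p * x⁻¹ + (1 - p) * (-1 / (1 - x))) x :=
    ((hasDerivAt_log hx₀).const_mul p).add
      ((((hasDerivAt_id x).const_sub 1).log hx₁).const_mul (1 - p))
  have hklBern : klBern p =ᶠ[nhds x]
      fun u => p * log p + (1 - p) * log (1 - p) - (p * log u + (1 - p) * log (1 - u)) := by
    filter_upwards [isOpen_Ioo.mem_nhds hx] with u hu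
    exact klBern_eq_sub p hu.1.ne' (sub_ne_zero.2 hu.2.ne')
  refine (hcross.const_sub _).congr_of_eventuallyEq hklBern |>.congr_deriv ?_
  field_simp
  ring

lemma HasDerivAt.klBern_replicator (p : ℝ) {x : ℝ → ℝ} {t d : ℝ} (hx : x t ∈ Ioo (0 : ℝ) 1)
    (hx' : HasDerivAt x (x t * (1 - x t) * d) t) :
    HasDerivAt (fun s => klBern p (x s)) ((x t - p) * d) t := by
  refine (hasDerivAt_klBern p hx).comp t hx' |>.congr_deriv ?_
  have hx₀ : x t ≠ 0 := hx.1.ne'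
  have hx₁ : 1 - x t ≠ 0 := sub_ne_zero.2 hx.2.ne'
  field_simp

lemma payoffDiffRow_sub (A : Matrix (Fin 2) (Fin 2) ℝ) (y q : ℝ) :
    payoffDiffRow A y - payoffDiffRow A q = (A 0 0 - A 1 0 - A 0 1 + A 1 1) * (y - q) := by
  unfold payoffDiffRow; ring

lemma payoffDiffCol_sub (B : Matrix (Fin 2) (Fin 2) ℝ) (x p : ℝ) :
    payoffDiffCol B x - payoffDiffCol B p = (B 0 0 - B 0 1 - B 1 0 + B 1 1) * (x - p) := by
  unfold payoffDiffCol; ring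

theorem rescaledZeroSum_KL_invariant_general
    (A : Matrix (Fin 2) (Fin 2) ℝ) (c : ℝ)
    (B : Matrix (Fin 2) (Fin 2) ℝ) (hB : ∀ i j, B i j = c * A i j)
    (p q : ℝ)
    (hNashA : payoffDiffRow A q = 0) (hNashB : payoffDiffCol B p = 0)
    (x y : ℝ → ℝ)
    (hx : ∀ t, x t ∈ Set.Ioo (0:ℝ) 1) (hy : ∀ t, y t ∈ Set.Ioo (0:ℝ) 1)
    (hx' : ∀ t, HasDerivAt x (x t * (1 - x t) * payoffDiffRow A (y t)) t)
    (hy' : ∀ t, HasDerivAt y (y t * (1 - y t) * payoffDiffCol B (x t)) t) :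
    ∀ s t : ℝ,
      (-c) * klBern p (x s) + klBern q (y s)
        = (-c) * klBern p (x t) + klBern q (y t) := by
  have hBA : B 0 0 - B 0 1 - B 1 0 + B 1 1 = c * (A 0 0 - A 1 0 - A 0 1 + A 1 1) := by
    simp only [hB]; ring
  have hV : ∀ t, HasDerivAt (fun t => (-c) * klBern p (x t) + klBern q (y t)) 0 t := by
    intro t
    refine (((hx' t).klBern_replicator p (hx t)).const_mul (-c)).add
      ((hy' t).klBern_replicator q (hy t)) |>.congr_deriv ?_
    linear_combination (-c * (x t - p)) * (payoffDiffRow_sub A (y t) q + hNashA)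
      + (y t - q) * (payoffDiffCol_sub B (x t) p + hNashB) + (x t - p) * (y t - q) * hBA
  exact is_const_of_deriv_eq_zero (fun t => (hV t).differentiableAt) (fun t => (hV t).deriv)

/-- In a 2×2 rescaled zero-sum game `(A, cA)` with `c < 0` and interior Nash
equilibrium `(p, q)`, the weighted sum of KL divergences
`(-c)·D(p‖x(t)) + D(q‖y(t))` is invariant along replicator trajectories. -/
theorem rescaledZeroSum_KL_invariant
    (A : Matrix (Fin 2) (Fin 2) ℝ) (c : ℝ) (hc : c < 0)
    (B : Matrix (Fin 2) (Fin 2) ℝ) (hB : ∀ i j, B i j = c * A i j)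
    (p q : ℝ) (hp : p ∈ Set.Ioo (0:ℝ) 1) (hq : q ∈ Set.Ioo (0:ℝ) 1)
    (hNashA : payoffDiffRow A q = 0) (hNashB : payoffDiffCol B p = 0)
    (x y : ℝ → ℝ)
    (hx : ∀ t, x t ∈ Set.Ioo (0:ℝ) 1) (hy : ∀ t, y t ∈ Set.Ioo (0:ℝ) 1)
    (hx' : ∀ t, HasDerivAt x (x t * (1 - x t) * payoffDiffRow A (y t)) t)
    (hy' : ∀ t, HasDerivAt y (y t * (1 - y t) * payoffDiffCol B (x t)) t) :
    ∀ s t : ℝ,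
      (-c) * klBern p (x s) + klBern q (y s)
        = (-c) * klBern p (x t) + klBern q (y t) :=
  rescaledZeroSum_KL_invariant_general A c B hB p q hNashA hNashB x y hx hy hx' hy'
end

section
/- Let T > 0, let x : ℝ → ℝ be continuously differentiable and T-periodic, let y : ℝ → ℝ be continuous and T-periodic, and let σ ∈ ℝ. Suppose there are exactly two times t₁ ≠ t₂ in [0,T) with x(t) = σ, i.e., {t ∈ [0,T) : x(t) = σ} = {t₁, t₂}, and that the crossings are transversal: v₁ := x′(t₁) ≠ 0 and v₂ := x′(t₂) ≠ 0. Set ν₁ := y(t₁), ν₂ := y(t₂). Then as ε → 0⁺, the ratio (∫₀ᵀ y(t)·1[|x(t) − σ| ≤ ε] dt) / (∫₀ᵀ 1[|x(t) − σ| ≤ ε] dt) converges to (ν₁/|v₁| + ν₂/|v₂|) / (1/|v₁| + 1/|v₂|). -/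
/-!
Near a transversal crossing `t₀` with speed `v`, the set `{|x - σ| ≤ ε}` is squeezed between
intervals around `t₀` of half-lengths `ε / C` and `ε / c` for any `c < |v| < C`, so it has length
`~ 2ε / |v|` and, `y` being continuous, carries `∫ y ~ 2ε y(t₀) / |v|`. Away from the crossings
`|x - σ|` is bounded below on a period by compactness, so for small `ε` both integrals are sums of
these local contributions. Starting the period at a point that is not a crossing keeps every
crossing in the interior.
-/

open Set Filter Topology MeasureTheory Asymptotics Metric

theorem HasDerivAt.eventually_abs_sub_bounds {x : ℝ → ℝ} {v t₀ c C : ℝ}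
    (hx : HasDerivAt x v t₀) (hc : c < |v|) (hC : |v| < C) :
    ∀ᶠ t in 𝓝 t₀, c * |t - t₀| ≤ |x t - x t₀| ∧ |x t - x t₀| ≤ C * |t - t₀| := by
  have hη : 0 < min (|v| - c) (C - |v|) := lt_min (sub_pos.2 hc) (sub_pos.2 hC)
  filter_upwards [(hasDerivAt_iff_isLittleO.1 hx).def hη] with t ht
  simp only [Real.norm_eq_abs, smul_eq_mul] at ht
  have hlin : |(t - t₀) * v| = |t - t₀| * |v| := abs_mul _ _
  have hη₁ := min_le_left (|v| - c) (C - |v|)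
  have hη₂ := min_le_right (|v| - c) (C - |v|)
  have hlow : |(t - t₀) * v| - |x t - x t₀| ≤ |x t - x t₀ - (t - t₀) * v| :=
    (abs_sub_abs_le_abs_sub _ _).trans (abs_sub_comm _ _).le
  have hupp : |x t - x t₀| ≤ |x t - x t₀ - (t - t₀) * v| + |(t - t₀) * v| := by
    simpa only [sub_add_cancel] using abs_add_le (x t - x t₀ - (t - t₀) * v) ((t - t₀) * v)
  constructor <;> nlinarith [abs_nonneg (t - t₀)]

theorem IsCompact.tendsto_sublevel_smallSets {X : Type*} [TopologicalSpace X] {K : Set X}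
    (hK : IsCompact K) {g : X → ℝ} (hg : ContinuousOn g K) (c : ℝ) :
    Tendsto (fun ε => {t ∈ K | g t ≤ ε}) (𝓝 c) (𝓝ˢ {t ∈ K | g t ≤ c}).smallSets := by
  refine tendsto_smallSets_iff.2 fun U hU => ?_
  obtain ⟨m, hcm, hm⟩ := (hK.diff isOpen_interior).exists_forall_le' (hg.mono sdiff_subset)
    (a := c) fun t ht => lt_of_not_ge fun h => ht.2 (subset_interior_iff_mem_nhdsSet.2 hU ⟨ht.1, h⟩)
  filter_upwards [eventually_lt_nhds hcm] with ε hε t ⟨htK, htε⟩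
  by_contra htU
  exact (hm t ⟨htK, fun h => htU (interior_subset h)⟩).not_gt (htε.trans_lt hε)

theorem tendsto_measureReal_div_of_closedBall_subset {E : ℝ → Set ℝ} {t₀ ℓ : ℝ} (hℓ : 0 < ℓ)
    (hE : ∀ r R, 0 < r → r < ℓ → ℓ < R →
      ∀ᶠ ε in 𝓝[>] 0, closedBall t₀ (r * ε) ⊆ E ε ∧ E ε ⊆ closedBall t₀ (R * ε)) :
    Tendsto (fun ε => volume.real (E ε) / (2 * ε)) (𝓝[>] 0) (𝓝 ℓ) := by
  have hbounds : ∀ r R, 0 < r → r < ℓ → ℓ < R → ∀ᶠ ε in 𝓝[>] 0,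
      r ≤ volume.real (E ε) / (2 * ε) ∧ volume.real (E ε) / (2 * ε) ≤ R := by
    intro r R hr hrℓ hℓR
    filter_upwards [hE r R hr hrℓ hℓR, self_mem_nhdsWithin] with ε ⟨hlow, hupp⟩ (hε : 0 < ε)
    have hfin : volume (E ε) ≠ ⊤ := (measure_mono hupp).trans_lt measure_closedBall_lt_top |>.ne
    have hlow' := measureReal_mono hlow hfin
    have hupp' := measureReal_mono hupp (measure_closedBall_lt_top (μ := volume)).ne
    rw [Real.volume_real_closedBall (by positivity)] at hlow'
    rw [Real.volume_real_closedBall (mul_pos (hr.trans (hrℓ.trans hℓR)) hε).le] at hupp'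
    rw [le_div_iff₀ (by positivity), div_le_iff₀ (by positivity)]
    constructor <;> linarith
  refine tendsto_order.2 ⟨fun w hw => ?_, fun w hw => ?_⟩
  · obtain ⟨r, hwr, hrℓ⟩ := exists_between (max_lt hw hℓ)
    filter_upwards [hbounds r (ℓ + 1) ((le_max_right _ _).trans_lt hwr) hrℓ (by linarith)]
      with ε hε
    exact (le_max_left _ _).trans_lt (hwr.trans_le hε.1)
  · obtain ⟨R, hℓR, hRw⟩ := exists_between hw
    filter_upwards [hbounds (ℓ / 2) R (by positivity) (by linarith) hℓR] with ε hε
    exact hε.2.trans_lt hRw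

theorem tendsto_setIntegral_div_of_tendsto_measureReal_div {α ι : Type*} [TopologicalSpace α]
    [MeasurableSpace α] {μ : Measure α} [IsLocallyFiniteMeasure μ] {l : Filter ι}
    {E : ι → Set α} {w : ι → ℝ} {f : α → ℝ} {t₀ : α} {ℓ : ℝ}
    (hf : ContinuousAt f t₀) (hfi : ∀ᶠ i in l, IntegrableOn f (E i) μ)
    (hE : Tendsto E l (𝓝 t₀).smallSets)
    (hvol : Tendsto (fun i => μ.real (E i) / w i) l (𝓝 ℓ)) :
    Tendsto (fun i => (∫ t in E i, f t ∂μ) / w i) l (𝓝 (f t₀ * ℓ)) := by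
  obtain ⟨s, hs, hμs⟩ := μ.finiteAt_nhds t₀
  have hfin : ∀ᶠ i in l, μ (E i) < ⊤ :=
    (tendsto_smallSets_iff.1 hE s hs).mono fun i hi => (measure_mono hi).trans_lt hμs
  have hrem : (fun i => (∫ t in E i, (f t - f t₀) ∂μ) / w i) =o[l]
      (fun i => μ.real (E i) / w i) := by
    refine IsLittleO.of_bound fun η hη => ?_
    have hnear : ∀ᶠ t in 𝓝 t₀, ‖f t - f t₀‖ ≤ η := by
      filter_upwards [hf.eventually (closedBall_mem_nhds (f t₀) hη)] with t ht
      rwa [dist_eq_norm] at ht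
    filter_upwards [hE.eventually (eventually_smallSets_forall.2 hnear), hfin] with i hnear hfin
    rw [norm_div, norm_div, Real.norm_of_nonneg measureReal_nonneg, mul_div_assoc']
    gcongr
    exact norm_setIntegral_le_of_norm_le_const hfin hnear
  have hsplit : ∀ᶠ i in l, f t₀ * (μ.real (E i) / w i) + (∫ t in E i, (f t - f t₀) ∂μ) / w i
      = (∫ t in E i, f t ∂μ) / w i := by
    filter_upwards [hfi, hfin] with i hfi hfin
    rw [integral_sub hfi (integrableOn_const hfin.ne), setIntegral_const, smul_eq_mul]
    ring
  simpa using ((tendsto_const_nhds.mul hvol).add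
    ((isLittleO_one_iff ℝ).1 (hrem.trans_isBigO (hvol.isBigO_one ℝ)))).congr' hsplit

theorem HasDerivAt.eventually_closedBall_subset_sublevel_subset {x : ℝ → ℝ} {v t₀ δ r R : ℝ}
    (hxd : HasDerivAt x v t₀) (hδ : 0 < δ)
    (hE : Tendsto (fun ε => {t ∈ closedBall t₀ δ | |x t - x t₀| ≤ ε}) (𝓝[>] 0) (𝓝 t₀).smallSets)
    (hr : 0 < r) (hrv : r < |v|⁻¹) (hvR : |v|⁻¹ < R) :
    ∀ᶠ ε in 𝓝[>] 0, closedBall t₀ (r * ε) ⊆ {t ∈ closedBall t₀ δ | |x t - x t₀| ≤ ε} ∧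
      {t ∈ closedBall t₀ δ | |x t - x t₀| ≤ ε} ⊆ closedBall t₀ (R * ε) := by
  have hR : 0 < R := hr.trans (hrv.trans hvR)
  have hloc := hxd.eventually_abs_sub_bounds (inv_lt_of_inv_lt₀ (inv_pos.1 (hr.trans hrv)) hvR)
    (lt_inv_of_lt_inv₀ hr hrv)
  have hball : Tendsto (fun ε => closedBall t₀ (r * ε)) (𝓝[>] 0) (𝓝 t₀).smallSets :=
    ((tendsto_closedBall_smallSets t₀).comp
      ((continuous_const.mul continuous_id).tendsto' 0 0 (mul_zero r))).mono_left
      nhdsWithin_le_nhds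
  filter_upwards [hE.eventually (eventually_smallSets_subset.2 hloc),
    hball.eventually (eventually_smallSets_subset.2 (hloc.and (closedBall_mem_nhds t₀ hδ))),
    self_mem_nhdsWithin] with ε hin hout (hε : 0 < ε)
  refine ⟨fun t ht => ⟨(hout ht).2, ?_⟩, fun t ht => ?_⟩
  · have hdist : |t - t₀| ≤ r * ε := ht
    calc |x t - x t₀| ≤ r⁻¹ * |t - t₀| := (hout ht).1.2
      _ ≤ r⁻¹ * (r * ε) := by gcongr
      _ = ε := by field_simp
  · have hdist : R⁻¹ * |t - t₀| ≤ ε := (hin ht).1.trans ht.2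
    show |t - t₀| ≤ R * ε
    rwa [inv_mul_le_iff₀ hR] at hdist

theorem tendsto_setIntegral_sublevel_div {x f : ℝ → ℝ} {t₀ v σ δ : ℝ} (hδ : 0 < δ)
    (hx : ContinuousOn x (closedBall t₀ δ)) (hxd : HasDerivAt x v t₀) (hv : v ≠ 0)
    (hzero : ∀ t ∈ closedBall t₀ δ, x t = σ ↔ t = t₀)
    (hfi : IntegrableOn f (closedBall t₀ δ)) (hf : ContinuousAt f t₀) :
    Tendsto (fun ε => (∫ t in {t ∈ closedBall t₀ δ | |x t - σ| ≤ ε}, f t) / (2 * ε))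
      (𝓝[>] 0) (𝓝 (f t₀ / |v|)) := by
  obtain rfl : x t₀ = σ := (hzero t₀ (mem_closedBall_self hδ.le)).2 rfl
  have hshrink : Tendsto (fun ε => {t ∈ closedBall t₀ δ | |x t - x t₀| ≤ ε}) (𝓝[>] 0)
      (𝓝 t₀).smallSets := by
    have hsub := (isCompact_closedBall t₀ δ).tendsto_sublevel_smallSets
      (g := fun t => |x t - x t₀|) (hx.sub continuousOn_const).abs 0
    have hZ : {t ∈ closedBall t₀ δ | |x t - x t₀| ≤ 0} = {t₀} := by
      ext t
      simp only [mem_ofPred_eq, mem_singleton_iff, abs_nonpos_iff, sub_eq_zero]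
      exact ⟨fun h => (hzero t h.1).1 h.2, by rintro rfl; exact ⟨mem_closedBall_self hδ.le, rfl⟩⟩
    rw [hZ, nhdsSet_singleton] at hsub
    exact hsub.mono_left nhdsWithin_le_nhds
  have hvol := tendsto_measureReal_div_of_closedBall_subset (inv_pos.2 (abs_pos.2 hv))
    fun r R hr hrv hvR => hxd.eventually_closedBall_subset_sublevel_subset hδ hshrink hr hrv hvR
  simpa only [div_eq_mul_inv] using tendsto_setIntegral_div_of_tendsto_measureReal_div hf
    (Eventually.of_forall fun ε => hfi.mono_set (sep_subset _ _)) hshrink hvol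

theorem Finset.exists_closedBall_subset_and_add_lt_dist {X : Type*} [MetricSpace X]
    {Z : Finset X} {U : Set X} (hU : IsOpen U) (hZU : ∀ z ∈ Z, z ∈ U) :
    ∃ δ > 0, (∀ z ∈ Z, closedBall z δ ⊆ U) ∧ ∀ z ∈ Z, ∀ z' ∈ Z, z ≠ z' → δ + δ < dist z z' := by
  have hsub : ∀ᶠ δ in 𝓝 (0 : ℝ), ∀ z ∈ Z, closedBall z δ ⊆ U :=
    (eventually_all_finset Z).2 fun z hz => (tendsto_closedBall_smallSets z).eventually
      (eventually_smallSets_subset.2 (hU.mem_nhds (hZU z hz)))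
  have hsep : ∀ᶠ δ in 𝓝 (0 : ℝ), ∀ z ∈ Z, ∀ z' ∈ Z, z ≠ z' → δ + δ < dist z z' := by
    refine (eventually_all_finset Z).2 fun z _ => (eventually_all_finset Z).2 fun z' _ => ?_
    rcases eq_or_ne z z' with rfl | hne
    · exact Eventually.of_forall fun _ h => absurd rfl h
    · filter_upwards [eventually_lt_nhds (half_pos (dist_pos.2 hne))] with δ hδ _
      linarith
  have hpos : ∀ᶠ δ in 𝓝[>] (0 : ℝ), 0 < δ := self_mem_nhdsWithin
  obtain ⟨δ, ⟨hδU, hδsep⟩, hδ⟩ :=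
    ((hsub.and hsep).filter_mono nhdsWithin_le_nhds |>.and hpos).exists
  exact ⟨δ, hδ, hδU, hδsep⟩

theorem eventually_Ioc_inter_sublevel_eq_biUnion {x : ℝ → ℝ} {a b σ δ : ℝ} {Z : Finset ℝ}
    (hx : ContinuousOn x (Icc a b)) (hZ : ∀ t ∈ Icc a b, x t = σ ↔ t ∈ Z) (hδ : 0 < δ)
    (hball : ∀ z ∈ Z, closedBall z δ ⊆ Ioo a b) :
    ∀ᶠ ε in 𝓝 0, Ioc a b ∩ {t | |x t - σ| ≤ ε} =
      ⋃ z ∈ Z, {t ∈ closedBall z δ | |x t - σ| ≤ ε} := by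
  have hsub := isCompact_Icc.tendsto_sublevel_smallSets (g := fun t => |x t - σ|)
    (hx.sub continuousOn_const).abs 0
  have hU : (⋃ z ∈ Z, ball z δ) ∈ 𝓝ˢ {t ∈ Icc a b | |x t - σ| ≤ 0} := by
    refine (isOpen_biUnion fun z _ => isOpen_ball).mem_nhdsSet.2 fun t ⟨htab, ht⟩ => ?_
    have htZ : t ∈ Z := (hZ t htab).1 (sub_eq_zero.1 (abs_nonpos_iff.1 ht))
    exact mem_biUnion htZ (mem_ball_self hδ)
  filter_upwards [tendsto_smallSets_iff.1 hsub _ hU] with ε hε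
  ext t
  constructor
  · rintro ⟨htab, ht⟩
    obtain ⟨z, hz, htz⟩ := mem_iUnion₂.1 (hε ⟨Ioc_subset_Icc_self htab, ht⟩)
    exact mem_iUnion₂.2 ⟨z, hz, ball_subset_closedBall htz, ht⟩
  · intro h
    obtain ⟨z, hz, htz, ht⟩ := mem_iUnion₂.1 h
    exact ⟨Ioo_subset_Ioc_self (hball z hz htz), ht⟩

theorem tendsto_setIntegral_Ioc_sublevel_div {x f : ℝ → ℝ} {a b σ : ℝ} {Z : Finset ℝ}
    (hx : ContinuousOn x (Icc a b)) (hf : ContinuousOn f (Icc a b))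
    (hZ : ∀ t ∈ Icc a b, x t = σ ↔ t ∈ Z) (hZab : ∀ z ∈ Z, z ∈ Ioo a b)
    (hdiff : ∀ z ∈ Z, DifferentiableAt ℝ x z) (hderiv : ∀ z ∈ Z, deriv x z ≠ 0) :
    Tendsto (fun ε => (∫ t in Ioc a b ∩ {t | |x t - σ| ≤ ε}, f t) / (2 * ε)) (𝓝[>] 0)
      (𝓝 (∑ z ∈ Z, f z / |deriv x z|)) := by
  obtain ⟨δ, hδ, hball, hsep⟩ := Z.exists_closedBall_subset_and_add_lt_dist isOpen_Ioo hZab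
  have hIcc : ∀ z ∈ Z, closedBall z δ ⊆ Icc a b := fun z hz =>
    (hball z hz).trans Ioo_subset_Icc_self
  have hfi : ∀ z ∈ Z, IntegrableOn f (closedBall z δ) := fun z hz =>
    (hf.mono (hIcc z hz)).integrableOn_compact (isCompact_closedBall z δ)
  have hlocal : ∀ z ∈ Z, Tendsto (fun ε => (∫ t in {t ∈ closedBall z δ | |x t - σ| ≤ ε}, f t) /
      (2 * ε)) (𝓝[>] 0) (𝓝 (f z / |deriv x z|)) := by
    intro z hz
    refine tendsto_setIntegral_sublevel_div hδ (hx.mono (hIcc z hz)) (hdiff z hz).hasDerivAt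
      (hderiv z hz) (fun t ht => ?_) (hfi z hz)
      (hf.continuousAt (Icc_mem_nhds (hZab z hz).1 (hZab z hz).2))
    rw [hZ t (hIcc z hz ht)]
    refine ⟨fun htZ => ?_, fun h => h ▸ hz⟩
    by_contra hne
    have := hsep t htZ z hz hne
    rw [mem_closedBall] at ht
    linarith
  refine (tendsto_finsetSum Z hlocal).congr' ?_
  filter_upwards [nhdsWithin_le_nhds (eventually_Ioc_inter_sublevel_eq_biUnion hx hZ hδ hball)]
    with ε hε
  have hclosed : ∀ z ∈ Z, IsClosed {t ∈ closedBall z δ | |x t - σ| ≤ ε} := fun z hz =>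
    ((hx.mono (hIcc z hz)).sub continuousOn_const).abs.preimage_isClosed_of_isClosed
      isClosed_closedBall isClosed_Iic
  rw [hε, integral_biUnion_finset Z (fun z hz => (hclosed z hz).measurableSet)
    (fun z hz z' hz' hne => (closedBall_disjoint_closedBall (hsep z hz z' hz' hne)).mono
      (sep_subset _ _) (sep_subset _ _))
    (fun z hz => (hfi z hz).mono_set (sep_subset _ _)), Finset.sum_div]

section Periodic

variable {α β : Type*} [AddCommGroup α] [LinearOrder α] [IsOrderedAddMonoid α] [Archimedean α]
  {T : α}

theorem injOn_toIcoMod (hT : 0 < T) (a b : α) : InjOn (toIcoMod hT a) (Ico b (b + T)) := by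
  intro z hz z' hz' h
  rw [← (toIcoMod_eq_self hT).2 hz, ← (toIcoMod_eq_self hT).2 hz', ← toIcoMod_toIcoMod hT b a z, h,
    toIcoMod_toIcoMod]

theorem Function.Periodic.apply_toIcoMod {x : α → β} (hx : Function.Periodic x T) (hT : 0 < T)
    (a t : α) : x (toIcoMod hT a t) = x t := by
  rw [← self_sub_toIcoDiv_zsmul]
  exact hx.sub_zsmul_eq _

theorem Function.Periodic.toIcoMod_mem_Ioo {x : α → β} (hx : Function.Periodic x T) (hT : 0 < T)
    {a t : α} (h : x a ≠ x t) : toIcoMod hT a t ∈ Ioo a (a + T) := by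
  refine ⟨(toIcoMod_mem_Ico hT a t).1.lt_of_ne fun ha => h ?_, (toIcoMod_mem_Ico hT a t).2⟩
  rw [ha, hx.apply_toIcoMod hT]

end Periodic

theorem Function.Periodic.hasDerivAt_toIcoMod {x : ℝ → ℝ} {T v t : ℝ}
    (hx : Function.Periodic x T) (hT : 0 < T) (h : HasDerivAt x v t) (a : ℝ) :
    HasDerivAt x v (toIcoMod hT a t) := by
  rw [← self_sub_toIcoDiv_zsmul]
  set n := toIcoDiv hT a t
  have hshift : (fun s => x (s + n • T)) = x := funext (hx.zsmul n)
  have hcomp := HasDerivAt.comp_add_const (t - n • T) (n • T) (by rwa [sub_add_cancel])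
  rwa [hshift] at hcomp

theorem Function.Periodic.eq_iff_mem_image_toIcoMod {x : ℝ → ℝ} {T σ a : ℝ} {Z : Finset ℝ}
    (hx : Function.Periodic x T) (hT : 0 < T) (hZ : {t ∈ Ico 0 T | x t = σ} = Z)
    (ha : x a ≠ σ) : ∀ t ∈ Icc a (a + T), x t = σ ↔ t ∈ Z.image (toIcoMod hT a) := by
  intro t ht
  rw [Finset.mem_image]
  constructor
  · intro htσ
    have htT : t ≠ a + T := by
      rintro rfl
      exact ha (by rwa [hx] at htσ)
    have hzZ : toIcoMod hT 0 t ∈ (Z : Set ℝ) := by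
      rw [← hZ]
      exact ⟨by simpa using toIcoMod_mem_Ico hT 0 t, by rwa [hx.apply_toIcoMod]⟩
    refine ⟨_, hzZ, ?_⟩
    rw [toIcoMod_toIcoMod, (toIcoMod_eq_self hT).2 ⟨ht.1, ht.2.lt_of_ne htT⟩]
  · rintro ⟨z, hz, rfl⟩
    rw [hx.apply_toIcoMod]
    rw [← Finset.mem_coe, ← hZ] at hz
    exact hz.2

theorem Function.Periodic.intervalIntegral_sublevel_eq {x f : ℝ → ℝ} {T σ : ℝ} (hT : 0 ≤ T)
    (hx : Measurable x) (hxper : Function.Periodic x T) (hfper : Function.Periodic f T)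
    (a ε : ℝ) :
    (∫ t in 0..T, if |x t - σ| ≤ ε then f t else 0) =
      ∫ t in Ioc a (a + T) ∩ {t | |x t - σ| ≤ ε}, f t := by
  set S := {t | |x t - σ| ≤ ε}
  have hS : MeasurableSet S := measurableSet_le (by fun_prop) measurable_const
  have hind : (fun t => if |x t - σ| ≤ ε then f t else 0) = S.indicator f := by
    ext t
    simp [S, Set.indicator_apply]
  have hper : Function.Periodic (S.indicator f) T := fun t => by
    simp [S, Set.indicator_apply, hxper t, hfper t]
  calc (∫ t in 0..T, if |x t - σ| ≤ ε then f t else 0)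
      = ∫ t in 0..0 + T, S.indicator f t := by rw [zero_add, hind]
    _ = ∫ t in a..a + T, S.indicator f t := hper.intervalIntegral_add_eq 0 a
    _ = ∫ t in Ioc a (a + T), S.indicator f t := intervalIntegral.integral_of_le (by linarith)
    _ = ∫ t in Ioc a (a + T) ∩ S, f t := setIntegral_indicator hS

theorem Function.Periodic.tendsto_intervalIntegral_sublevel_div {x f : ℝ → ℝ} {T σ : ℝ}
    (hT : 0 < T) (hx : Continuous x) (hxper : Function.Periodic x T) (hf : Continuous f)
    (hfper : Function.Periodic f T) {Z : Finset ℝ} (hZ : {t ∈ Ico 0 T | x t = σ} = Z)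
    (hdiff : ∀ z ∈ Z, DifferentiableAt ℝ x z) (hderiv : ∀ z ∈ Z, deriv x z ≠ 0) :
    Tendsto (fun ε => (∫ t in 0..T, if |x t - σ| ≤ ε then f t else 0) / (2 * ε)) (𝓝[>] 0)
      (𝓝 (∑ z ∈ Z, f z / |deriv x z|)) := by
  have hZT : ∀ z ∈ Z, z ∈ Ico 0 T ∧ x z = σ := fun z hz => by
    rwa [← Finset.mem_coe, ← hZ] at hz
  obtain ⟨a, ha, haZ⟩ := ((Ico_infinite hT).sdiff Z.finite_toSet).nonempty
  have hxa : x a ≠ σ := fun h => haZ (hZ ▸ ⟨ha, h⟩)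
  have hdu : ∀ z ∈ Z, HasDerivAt x (deriv x z) (toIcoMod hT a z) := fun z hz =>
    hxper.hasDerivAt_toIcoMod hT (hdiff z hz).hasDerivAt a
  have hlim := tendsto_setIntegral_Ioc_sublevel_div hx.continuousOn hf.continuousOn
    (hxper.eq_iff_mem_image_toIcoMod hT hZ hxa)
    (by simpa using fun z hz => hxper.toIcoMod_mem_Ioo hT (((hZT z hz).2).symm ▸ hxa))
    (by simpa using fun z hz => (hdu z hz).differentiableAt)
    (by simpa using fun z hz => (hdu z hz).deriv.trans_ne (hderiv z hz))
  rw [Finset.sum_image ((injOn_toIcoMod hT a 0).mono fun z hz => by simpa using (hZT z hz).1)]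
    at hlim
  have hsum : ∑ z ∈ Z, f (toIcoMod hT a z) / |deriv x (toIcoMod hT a z)| =
      ∑ z ∈ Z, f z / |deriv x z| :=
    Finset.sum_congr rfl fun z hz => by rw [hfper.apply_toIcoMod, (hdu z hz).deriv]
  rw [hsum] at hlim
  exact hlim.congr fun ε => by
    rw [hxper.intervalIntegral_sublevel_eq hT.le hx.measurable hfper a ε]

/-- For a periodic orbit with exactly two transversal crossings of the level
`x = σ` per period, the time-average of `y` observed while `|x − σ| ≤ ε`
converges, as `ε → 0⁺`, to the speed-weighted average of the two values of
`y` at the crossings. -/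
theorem time_average_at_level_crossings
    (T : ℝ) (hT : 0 < T)
    (x : ℝ → ℝ) (hx : ContDiff ℝ 1 x) (hxper : Function.Periodic x T)
    (y : ℝ → ℝ) (hy : Continuous y) (hyper : Function.Periodic y T)
    (σ : ℝ) (t₁ t₂ : ℝ) (hne : t₁ ≠ t₂)
    (hcross : {t ∈ Set.Ico (0:ℝ) T | x t = σ} = {t₁, t₂})
    (hv₁ : deriv x t₁ ≠ 0) (hv₂ : deriv x t₂ ≠ 0) :
    Filter.Tendsto
      (fun ε : ℝ =>
        (∫ t in (0:ℝ)..T, if |x t - σ| ≤ ε then y t else 0) /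
        (∫ t in (0:ℝ)..T, if |x t - σ| ≤ ε then (1:ℝ) else 0))
      (nhdsWithin 0 (Set.Ioi 0))
      (nhds ((y t₁ / |deriv x t₁| + y t₂ / |deriv x t₂|) /
             (1 / |deriv x t₁| + 1 / |deriv x t₂|))) := by
  have hZ : {t ∈ Ico 0 T | x t = σ} = ↑({t₁, t₂} : Finset ℝ) := by
    rw [hcross, Finset.coe_pair]
  have hdiff : ∀ z ∈ ({t₁, t₂} : Finset ℝ), DifferentiableAt ℝ x z :=
    fun z _ => hx.differentiable one_ne_zero z
  have hderiv : ∀ z ∈ ({t₁, t₂} : Finset ℝ), deriv x z ≠ 0 := by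
    simpa using ⟨hv₁, hv₂⟩
  have hnum := hxper.tendsto_intervalIntegral_sublevel_div hT hx.continuous hy hyper hZ hdiff
    hderiv
  have hden := hxper.tendsto_intervalIntegral_sublevel_div hT hx.continuous continuous_const
    (fun _ => rfl) (f := fun _ => 1) hZ hdiff hderiv
  rw [Finset.sum_pair hne] at hnum hden
  have hden_ne : 1 / |deriv x t₁| + 1 / |deriv x t₂| ≠ 0 := by positivity
  refine (hnum.div hden hden_ne).congr' ?_
  filter_upwards [self_mem_nhdsWithin] with ε (hε : 0 < ε)
  exact div_div_div_cancel_right₀ (by positivity) _ _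
end

section
/- Let n ≥ 1, let u : ℝ → ℝⁿ be continuous, and let x : ℝ → ℝⁿ be differentiable with x_a(t) > 0 and Σ_b x_b(t) = 1 for all t, satisfying the replicator dynamics x_a′(t) = x_a(t)·(u_a(t) − Σ_b x_b(t)·u_b(t)) for every action a and all t. Then for every action a and every T ≥ 0, the cumulative regret against the fixed action a satisfies ∫₀ᵀ (u_a(t) − Σ_b x_b(t)·u_b(t)) dt = ln(x_a(T)) − ln(x_a(0)) ≤ −ln(x_a(0)). In particular, the external regret of replicator dynamics is bounded by a constant independent of T. -/
/-! Along the replicator flow, `(log x_a)' = x_a' / x_a = u_a − ⟨x, u⟩`, so the regret against `a`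
telescopes to `log x_a(T) − log x_a(0)`; since `x_a(T) ≤ 1`, the first term is nonpositive. -/

open Real

theorem hasDerivAt_log_of_hasDerivAt_mul_self {f : ℝ → ℝ} {g t : ℝ}
    (hf : HasDerivAt f (f t * g) t) (hft : f t ≠ 0) :
    HasDerivAt (fun s => log (f s)) g t := by
  simpa [mul_div_cancel_left₀ g hft] using hf.log hft

theorem integral_eq_log_sub_log_of_hasDerivAt_mul_self {f g : ℝ → ℝ} {a b : ℝ}
    (hf : ∀ t, HasDerivAt f (f t * g t) t) (hf0 : ∀ t, f t ≠ 0)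
    (hg : IntervalIntegrable g MeasureTheory.volume a b) :
    ∫ t in a..b, g t = log (f b) - log (f a) :=
  intervalIntegral.integral_eq_sub_of_hasDerivAt
    (fun t _ => hasDerivAt_log_of_hasDerivAt_mul_self (hf t) (hf0 t)) hg

theorem log_apply_nonpos_of_sum_eq_one {ι : Type*} [Fintype ι] {p : ι → ℝ}
    (hp : ∀ i, 0 ≤ p i) (hsum : ∑ i, p i = 1) (i : ι) : log (p i) ≤ 0 :=
  log_nonpos (hp i) (hsum ▸ Finset.single_le_sum (fun j _ => hp j) (Finset.mem_univ i))

theorem replicator_external_regret_bounded_general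
    (n : ℕ)
    (u : ℝ → Fin n → ℝ) (hu : Continuous fun p : ℝ × Fin n => u p.1 p.2)
    (x : ℝ → Fin n → ℝ)
    (hpos : ∀ t a, 0 < x t a)
    (hsum : ∀ t, ∑ b, x t b = 1)
    (hderiv : ∀ a t, HasDerivAt (fun s => x s a)
      (x t a * (u t a - ∑ b, x t b * u t b)) t) :
    ∀ (a : Fin n) (T : ℝ), 0 ≤ T →
      (∫ t in (0:ℝ)..T, (u t a - ∑ b, x t b * u t b))
        = Real.log (x T a) - Real.log (x 0 a) ∧
      (∫ t in (0:ℝ)..T, (u t a - ∑ b, x t b * u t b))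
        ≤ - Real.log (x 0 a) := by
  intro a T _
  have hu_coord (b : Fin n) : Continuous fun t => u t b :=
    hu.comp (continuous_id.prodMk continuous_const)
  have hx_coord (b : Fin n) : Continuous fun t => x t b :=
    continuous_iff_continuousAt.2 fun t => (hderiv b t).continuousAt
  have hregret : Continuous fun t => u t a - ∑ b, x t b * u t b :=
    (hu_coord a).sub (continuous_finsetSum _ fun b _ => (hx_coord b).mul (hu_coord b))
  have hint := integral_eq_log_sub_log_of_hasDerivAt_mul_self (hderiv a)
    (fun t => (hpos t a).ne') (hregret.intervalIntegrable 0 T)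
  refine ⟨hint, ?_⟩
  have := log_apply_nonpos_of_sum_eq_one (fun b => (hpos T b).le) (hsum T) a
  linarith

/-- Replicator dynamics has bounded external regret against every fixed
action: the cumulative regret equals `ln x_a(T) − ln x_a(0)`, which is at
most the constant `−ln x_a(0)`, independently of `T`. -/
theorem replicator_external_regret_bounded
    (n : ℕ) (hn : 1 ≤ n)
    (u : ℝ → Fin n → ℝ) (hu : Continuous fun p : ℝ × Fin n => u p.1 p.2)
    (x : ℝ → Fin n → ℝ)
    (hpos : ∀ t a, 0 < x t a)
    (hsum : ∀ t, ∑ b, x t b = 1)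
    (hderiv : ∀ a t, HasDerivAt (fun s => x s a)
      (x t a * (u t a - ∑ b, x t b * u t b)) t) :
    ∀ (a : Fin n) (T : ℝ), 0 ≤ T →
      (∫ t in (0:ℝ)..T, (u t a - ∑ b, x t b * u t b))
        = Real.log (x T a) - Real.log (x 0 a) ∧
      (∫ t in (0:ℝ)..T, (u t a - ∑ b, x t b * u t b))
        ≤ - Real.log (x 0 a) :=
  replicator_external_regret_bounded_general n u hu x hpos hsum hderiv
end

section
/- Let u₁, u₂ : ℝ → ℝ be continuous and let p : ℝ → (0,1) be differentiable with p′(t) = p(t)(1−p(t))·(u₁(t) − u₂(t)) for all t (replicator dynamics over two actions, where p is the probability of the first action). Fix p₀ and ε with 0 < p₀ − ε < p₀ + ε < 1, and let 0 ≤ a₁ < b₁ ≤ a₂ < b₂ ≤ … ≤ a_N < b_N be times such that for odd j, p(a_j) = p₀ − ε and p(b_j) = p₀ + ε, while for even j, p(a_j) = p₀ + ε and p(b_j) = p₀ − ε (the trajectory alternately traverses the interval (p₀−ε, p₀+ε) from one end to the other). Then the aggregated regret against the first action accumulated over these intervals satisfies Σ_{j=1}^{N} ∫_{a_j}^{b_j}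 ( u₁(t) − (p(t)·u₁(t) + (1−p(t))·u₂(t)) ) dt ≤ ln(p₀ + ε) − ln(p₀ − ε). In particular it remains bounded for all N. -/
/-!
Along replicator dynamics, `(log p)' = p'/p = (1 - p)(u₁ - u₂)`, which is exactly the
instantaneous regret against the first action. So the regret over `[a_j, b_j]` is
`log p(b_j) - log p(a_j) = ±(log(p₀+ε) - log(p₀-ε))`, with signs alternating in `j`;
partial sums of an alternating sequence `L, -L, L, …` with `L ≥ 0` never exceed `L`.
-/

open Real Finset

theorem hasDerivAt_log_of_replicator {p : ℝ → ℝ} {t x y : ℝ}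
    (hp : HasDerivAt p (p t * (1 - p t) * (x - y)) t) (hpt : p t ≠ 0) :
    HasDerivAt (fun s => log (p s)) (x - (p t * x + (1 - p t) * y)) t := by
  convert hp.log hpt using 1
  field_simp
  ring

theorem integral_regret_eq_log_sub {u₁ u₂ p : ℝ → ℝ} {a b : ℝ}
    (hu₁ : Continuous u₁) (hu₂ : Continuous u₂)
    (hp : ∀ t ∈ Set.uIcc a b, HasDerivAt p (p t * (1 - p t) * (u₁ t - u₂ t)) t)
    (hp0 : ∀ t ∈ Set.uIcc a b, p t ≠ 0) :
    ∫ t in a..b, (u₁ t - (p t * u₁ t + (1 - p t) * u₂ t)) = log (p b) - log (p a) := by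
  have hpc : ContinuousOn p (Set.uIcc a b) := fun t ht =>
    (hp t ht).continuousAt.continuousWithinAt
  have hint : IntervalIntegrable (fun t => u₁ t - (p t * u₁ t + (1 - p t) * u₂ t))
      MeasureTheory.volume a b :=
    (hu₁.continuousOn.sub ((hpc.mul hu₁.continuousOn).add
      ((continuousOn_const.sub hpc).mul hu₂.continuousOn))).intervalIntegrable
  exact intervalIntegral.integral_eq_sub_of_hasDerivAt
    (fun t ht => hasDerivAt_log_of_replicator (hp t ht) (hp0 t ht)) hint

theorem sum_range_neg_one_pow_mul_le {L : ℝ} (hL : 0 ≤ L) (N : ℕ) :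
    ∑ j ∈ range N, (-1) ^ j * L ≤ L := by
  rw [← sum_mul, neg_one_geom_sum]
  split_ifs <;> simp [hL]

theorem replicator_band_regret_bounded_general
    (u₁ u₂ : ℝ → ℝ) (hu₁ : Continuous u₁) (hu₂ : Continuous u₂)
    (p : ℝ → ℝ) (hp : ∀ t, p t ∈ Set.Ioo (0:ℝ) 1)
    (hp' : ∀ t, HasDerivAt p (p t * (1 - p t) * (u₁ t - u₂ t)) t)
    (p₀ ε : ℝ) (h₁ : 0 < p₀ - ε) (h₂ : p₀ - ε < p₀ + ε)
    (N : ℕ) (a b : ℕ → ℝ)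
    (hodd : ∀ j < N, j % 2 = 0 → p (a j) = p₀ - ε ∧ p (b j) = p₀ + ε)
    (heven : ∀ j < N, j % 2 = 1 → p (a j) = p₀ + ε ∧ p (b j) = p₀ - ε) :
    ∑ j ∈ Finset.range N,
        ∫ t in (a j)..(b j), (u₁ t - (p t * u₁ t + (1 - p t) * u₂ t))
      ≤ Real.log (p₀ + ε) - Real.log (p₀ - ε) := by
  set L := log (p₀ + ε) - log (p₀ - ε)
  have hL : 0 ≤ L := sub_nonneg.2 (log_le_log h₁ h₂.le)
  have htraversal : ∀ j ∈ range N,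
      ∫ t in (a j)..(b j), (u₁ t - (p t * u₁ t + (1 - p t) * u₂ t)) = (-1) ^ j * L := by
    intro j hj
    rw [mem_range] at hj
    rw [integral_regret_eq_log_sub hu₁ hu₂ (fun t _ => hp' t) (fun t _ => (hp t).1.ne')]
    rcases Nat.even_or_odd j with hj2 | hj2
    · obtain ⟨ha, hb⟩ := hodd j hj (Nat.even_iff.mp hj2)
      rw [ha, hb, hj2.neg_one_pow, one_mul]
    · obtain ⟨ha, hb⟩ := heven j hj (Nat.odd_iff.mp hj2)
      rw [ha, hb, hj2.neg_one_pow, neg_one_mul, neg_sub]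
  rw [sum_congr rfl htraversal]
  exact sum_range_neg_one_pow_mul_le hL N

/-- The regret of replicator dynamics (two actions) against the first action,
aggregated over the time intervals during which the trajectory traverses the
band `(p₀ − ε, p₀ + ε)` alternately from end to end, is bounded by
`ln(p₀+ε) − ln(p₀−ε)`, uniformly in the number of traversals. -/
theorem replicator_band_regret_bounded
    (u₁ u₂ : ℝ → ℝ) (hu₁ : Continuous u₁) (hu₂ : Continuous u₂)
    (p : ℝ → ℝ) (hp : ∀ t, p t ∈ Set.Ioo (0:ℝ) 1)
    (hp' : ∀ t, HasDerivAt p (p t * (1 - p t) * (u₁ t - u₂ t)) t)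
    (p₀ ε : ℝ) (h₁ : 0 < p₀ - ε) (h₂ : p₀ - ε < p₀ + ε) (h₃ : p₀ + ε < 1)
    (N : ℕ) (a b : ℕ → ℝ)
    (hab : ∀ j < N, a j < b j)
    (hba : ∀ j, j + 1 < N → b j ≤ a (j + 1))
    (h0 : 0 < N → 0 ≤ a 0)
    (hodd : ∀ j < N, j % 2 = 0 → p (a j) = p₀ - ε ∧ p (b j) = p₀ + ε)
    (heven : ∀ j < N, j % 2 = 1 → p (a j) = p₀ + ε ∧ p (b j) = p₀ - ε) :
    ∑ j ∈ Finset.range N,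
        ∫ t in (a j)..(b j), (u₁ t - (p t * u₁ t + (1 - p t) * u₂ t))
      ≤ Real.log (p₀ + ε) - Real.log (p₀ - ε) :=
  replicator_band_regret_bounded_general u₁ u₂ hu₁ hu₂ p hp hp' p₀ ε h₁ h₂ N a b hodd heven
end
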